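/- If D is a finite directed acyclic graph whose competition graph is G together with t ≥ 1 isolated vertices, then by deleting arcs one may obtain a DAG D' with the same competition graph in which some added isolated vertex u has no outgoing arcs. -/

import Mathlib

namespace CompKim

open SimpleGraph

variable {V : Type*}

/-- The competition graph of a digraph given as a relation: distinct vertices are
adjacent iff they have a common out-neighbor. -/
def competitionGraph {W : Type*} (D : W → W → Prop) : SimpleGraph W where
  Adj a b := a ≠ b ∧ ∃ w, D a w ∧ D b w
  symm := ⟨by rintro a b ⟨hab, w, h1, h2⟩; exact ⟨hab.symm, w, h2, h1⟩⟩
  loopless := ⟨by rintro a ⟨h, -⟩; exact h rfl⟩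

/-- A relation is a DAG relation if it admits no directed cycle. -/
def IsDagRel {W : Type*} (D : W → W → Prop) : Prop := ∀ w, ¬ Relation.TransGen D w w

/-- `G` together with `k` added isolated vertices. -/
def addIsolated {V : Type*} (G : SimpleGraph V) (k : ℕ) : SimpleGraph (V ⊕ Fin k) where
  Adj a b := ∃ u v, a = Sum.inl u ∧ b = Sum.inl v ∧ G.Adj u v
  symm := ⟨by rintro a b ⟨u, v, rfl, rfl, h⟩; exact ⟨v, u, rfl, rfl, h.symm⟩⟩
  loopless := ⟨by
    rintro a ⟨u, v, rfl, heq, hadj⟩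
    cases Sum.inl.inj heq
    exact hadj.ne rfl⟩

/-- The competition number: the least `k` such that `G` plus `k` isolated vertices is
the competition graph of a directed acyclic graph. -/
noncomputable def competitionNumber {V : Type*} (G : SimpleGraph V) : ℕ :=
  sInf {k | ∃ D : (V ⊕ Fin k) → (V ⊕ Fin k) → Prop,
    IsDagRel D ∧ competitionGraph D = addIsolated G k}

/-- If a DAG has `G` plus `t ≥ 1` isolated vertices as competition graph, then deleting
arcs yields a DAG with the same competition graph in which some added isolated vertex
has no outgoing arcs. -/
theorem exists_subDag_isolated_no_out [Fintype V] (G : SimpleGraph V) (t : ℕ)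
    (ht : 1 ≤ t) (D : (V ⊕ Fin t) → (V ⊕ Fin t) → Prop) (hdag : IsDagRel D)
    (hcomp : competitionGraph D = addIsolated G t) :
    ∃ D' : (V ⊕ Fin t) → (V ⊕ Fin t) → Prop,
      (∀ a b, D' a b → D a b) ∧ IsDagRel D' ∧
      competitionGraph D' = addIsolated G t ∧
      ∃ u : Fin t, ∀ x, ¬ D' (Sum.inr u) x := by
  set u0 : Fin t := ⟨0, ht⟩
  refine ⟨fun a b => D a b ∧ a ≠ Sum.inr u0, fun a b h => h.1, ?_, ?_, u0, ?_⟩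
  · intro w hw
    exact hdag w (Relation.TransGen.mono (fun a b h => h.1) w w hw)
  · ext a b
    constructor
    · rintro ⟨hab, w, ⟨h1, -⟩, ⟨h2, -⟩⟩
      rw [← hcomp]
      exact ⟨hab, w, h1, h2⟩
    · intro h
      obtain ⟨x, y, rfl, rfl, -⟩ := id h
      rw [← hcomp] at h
      obtain ⟨hab, w, h1, h2⟩ := h
      exact ⟨hab, w, ⟨h1, by simp⟩, ⟨h2, by simp⟩⟩
  · rintro x ⟨-, h⟩
    exact h rfl

end CompKim
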